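/- A finite completely simple semigroup M[G,Q] of period p is orthodox (its idempotents form a subsemigroup) if and only if it satisfies the identity (xy)^p = x^p y^p, where p is the exponent of the group G. -/
import Mathlib


/-- `iterMul m x n = x^(n+1)` with respect to the binary operation `m`. -/
def iterMul {α : Type*} (m : α → α → α) (x : α) : ℕ → α
  | 0 => x
  | n + 1 => m (iterMul m x n) x

/-- A finite completely simple semigroup `M[G,Q]` of period `p` (the exponent of the
group `G`) is orthodox (its idempotents form a subsemigroup) if and only if it satisfies
the identity `(xy)^p = x^p y^p`. -/
theorem stmt11 {G : Type*} [Group G] [Finite G] {I Λ : Type*}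
    [Finite I] [Finite Λ] [Nonempty I] [Nonempty Λ] (Q : Λ → I → G)
    (p : ℕ) (hp : 0 < p) (hexp : ∀ g : G, g ^ p = 1)
    (hleast : ∀ q : ℕ, 0 < q → (∀ g : G, g ^ q = 1) → p ≤ q) :
    let m : I × G × Λ → I × G × Λ → I × G × Λ :=
      fun x y => (x.1, x.2.1 * Q x.2.2 y.1 * y.2.1, y.2.2)
    ((∀ e f : I × G × Λ, m e e = e → m f f = f → m (m e f) (m e f) = m e f) ↔
      (∀ x y : I × G × Λ,
        iterMul m (m x y) (p - 1) = m (iterMul m x (p - 1)) (iterMul m y (p - 1)))) := by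
  intro m
  have hm : ∀ (i j : I) (g h : G) (l mu : Λ),
      m (i, g, l) (j, h, mu) = (i, g * Q l j * h, mu) := fun _ _ _ _ _ _ => rfl
  have key : ∀ (i : I) (g : G) (l : Λ) (n : ℕ),
      iterMul m (i, g, l) n = (i, (g * Q l i) ^ n * g, l) := by
    intro i g l n
    induction n with
    | zero => simp [iterMul]
    | succ n ih =>
      rw [iterMul, ih, hm, pow_succ]
      group
  have hpow : ∀ (i : I) (g : G) (l : Λ),
      iterMul m (i, g, l) (p - 1) = (i, (Q l i)⁻¹, l) := by
    intro i g l
    rw [key]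
    congr 2
    have h1 : (g * Q l i) ^ (p - 1) * (g * Q l i) = 1 := by
      rw [← pow_succ, Nat.sub_add_cancel hp, hexp]
    rw [eq_inv_of_mul_eq_one_left h1, mul_inv_rev]; group
  have hidem : ∀ (i : I) (g : G) (l : Λ),
      m (i, g, l) (i, g, l) = (i, g, l) ↔ g = (Q l i)⁻¹ := by
    intro i g l
    rw [hm, Prod.ext_iff, Prod.ext_iff]
    simp only [and_true, true_and]
    constructor
    · intro h
      have : g * Q l i = 1 := by
        have := mul_right_cancel (b := g) (a := g * Q l i) (c := 1) (by rw [one_mul, h])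
        exact this
      rw [eq_inv_iff_mul_eq_one, this]
    · intro h; rw [h]; group
  set C : Prop := ∀ (i j : I) (l mu : Λ),
      (Q l i)⁻¹ * Q l j * (Q mu j)⁻¹ = (Q mu i)⁻¹ with hC
  have orth_iff : (∀ e f : I × G × Λ, m e e = e → m f f = f →
      m (m e f) (m e f) = m e f) ↔ C := by
    constructor
    · intro h i j l mu
      have he : m (i, (Q l i)⁻¹, l) (i, (Q l i)⁻¹, l) = (i, (Q l i)⁻¹, l) :=
        (hidem i _ l).mpr rfl
      have hf : m (j, (Q mu j)⁻¹, mu) (j, (Q mu j)⁻¹, mu) = (j, (Q mu j)⁻¹, mu) :=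
        (hidem j _ mu).mpr rfl
      have := h _ _ he hf
      rw [hm] at this
      exact (hidem i _ mu).mp this
    · rintro hc ⟨i, g, l⟩ ⟨j, h, mu⟩ he hf
      have hg : g = (Q l i)⁻¹ := (hidem i g l).mp he
      have hh : h = (Q mu j)⁻¹ := (hidem j h mu).mp hf
      rw [hm]
      exact (hidem i _ mu).mpr (by rw [hg, hh, hc])
  have id_iff : (∀ x y : I × G × Λ,
      iterMul m (m x y) (p - 1) = m (iterMul m x (p - 1)) (iterMul m y (p - 1))) ↔ C := by
    constructor
    · intro h i j l mu
      have := h (i, 1, l) (j, 1, mu)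
      rw [hm, hpow, hpow, hpow, hm, Prod.ext_iff, Prod.ext_iff] at this
      exact this.2.1.symm
    · rintro hc ⟨i, g, l⟩ ⟨j, h, mu⟩
      rw [hm, hpow, hpow, hpow, hm, hc]
  rw [orth_iff, id_iff]
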